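/- arXiv:2412.20401 — 3 statements merged into one kernel-verified Lean document; each statement's English description precedes it below -/
import Mathlib

section
/- Let P, Q be regular ω-posets and (←_n) a thin arrow-sequence in P(Q × P). Then ⊐ = ⋃_n ⟨←_n is a strong refiner whose associated continuous map equals φ = ⋂_n (←_n)̄_S; in particular, ⊐ is a refiner if and only if φ is a function, and in that case φ = S_⊐ is continuous. -/
namespace OP

section OmegaPoset

variable (P : Type*) [PartialOrder P]

/-- The n-th cone of the poset: `cone 0` is the set of maximal elements. -/
def cone : ℕ → Set P
  | 0 => {p | ∀ q, ¬ p < q}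
  | n + 1 => {p | ∀ q, p < q → q ∈ cone n}

/-- The n-th level: atoms (minimal elements) of the n-th cone. -/
def level (n : ℕ) : Set P := {p | p ∈ cone P n ∧ ∀ q, q < p → q ∉ cone P n}

/-- An ω-poset: all levels finite and every element in some cone. -/
def IsOmegaPoset : Prop := (∀ n, (level P n).Finite) ∧ ∀ p : P, ∃ n, p ∈ cone P n

variable {P}

/-- `refines A C` : every element of `A` lies below some element of `C` (`A ≤ C`). -/
def refines (A C : Set P) : Prop := ∀ a ∈ A, ∃ c ∈ C, a ≤ c

/-- A cap is a subset refined by some level. -/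
def IsCap (C : Set P) : Prop := ∃ n, refines (level P n) C

/-- A selector meets every cap. -/
def IsSelector (S : Set P) : Prop := ∀ C : Set P, IsCap C → (S ∩ C).Nonempty

/-- `wedge p q` : `p` and `q` have a common lower bound. -/
def wedge (p q : P) : Prop := ∃ r, r ≤ p ∧ r ≤ q

def wedgeSet (p : P) : Set P := {q | wedge p q}

/-- The adjacency relation `p ⌅ q`. -/
def barwedge (p q : P) : Prop := ∀ C : Set P, IsCap C → ∃ c ∈ C, wedge p c ∧ wedge c q

/-- `p ⊲_C q`. -/
def starBelowOn (C : Set P) (p q : P) : Prop := ∀ c ∈ C, wedge p c → c ≤ q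

/-- The star-below relation `p ⊲ q`. -/
def starBelow (p q : P) : Prop := ∃ n, starBelowOn (level P n) p q

/-- A clique: pairwise adjacent set. -/
def IsClique (X : Set P) : Prop := ∀ p ∈ X, ∀ q ∈ X, barwedge p q

/-- Unbounded subset: meets `C^≥` for every cap `C`. -/
def IsUnbounded (X : Set P) : Prop := ∀ C : Set P, IsCap C → ∃ u ∈ X, ∃ c ∈ C, u ≤ c

variable (P)

/-- Regularity: every level is eventually star-refined by a later level. -/
def IsRegular : Prop :=
  ∀ m, ∃ n, m < n ∧ ∀ p ∈ level P n, ∃ q ∈ level P m, starBelow p q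

/-- The spectrum: minimal selectors. -/
def Spec : Set (Set P) := {S | IsSelector S ∧ ∀ T ⊆ S, IsSelector T → T = S}

def SpecT : Type _ := {S : Set P // S ∈ Spec P}

instance : TopologicalSpace (SpecT P) :=
  TopologicalSpace.generateFrom {U | ∃ p : P, U = {S : SpecT P | p ∈ S.1}}

/-- The clique-spectrum: unbounded maximal cliques. -/
def CliqueSpec : Set (Set P) :=
  {X | IsUnbounded X ∧ IsClique X ∧ ∀ Y : Set P, IsClique Y → X ⊆ Y → Y = X}

def CliqueSpecT : Type _ := {X : Set P // X ∈ CliqueSpec P}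

instance : TopologicalSpace (CliqueSpecT P) :=
  TopologicalSpace.generateFrom {U | ∃ p : P, U = {X : CliqueSpecT P | p ∉ X.1}}

variable {P}

/-- The basic open set `p_S`. -/
def pSOpen (p : P) : Set (SpecT P) := {S | p ∈ S.1}

/-- The closed set `p̄_S = {S : S ⊆ p^∧}`. -/
def pSBar (p : P) : Set (SpecT P) := {S | S.1 ⊆ wedgeSet p}

/-- Prime ω-poset: every basic open set is nonempty. -/
def IsPrimePoset (P : Type*) [PartialOrder P] : Prop := ∀ p : P, (pSOpen p).Nonempty

end OmegaPoset

end OP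

namespace OP

section Refiners

variable {P Q : Type*} [PartialOrder P] [PartialOrder Q]

/-- A refiner: every cap of `Q` is refined through the relation by some cap of `P`. -/
def IsRefinerRel (R : Q → P → Prop) : Prop :=
  ∀ C : Set Q, IsCap C → ∃ B : Set P, IsCap B ∧ ∀ b ∈ B, ∃ c ∈ C, R c b

/-- `∧`-preserving: `⊐ ∘ ∧ ∘ ⊏ ⊆ ∧`. -/
def WedgePres (R : Q → P → Prop) : Prop :=
  ∀ q p p' q', R q p → wedge p p' → R q' p' → wedge q q'

/-- `⌅`-preserving: `⊐ ∘ ⌅ ∘ ⊏ ⊆ ⌅`. -/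
def BarwedgePres (R : Q → P → Prop) : Prop :=
  ∀ q p p' q', R q p → barwedge p p' → R q' p' → barwedge q q'

/-- The star `⊐*` of a relation: `q ⊐* p` iff some cap `C` has `C ∩ p^∧ ⊏ q`. -/
def relStar (R : Q → P → Prop) (q : Q) (p : P) : Prop :=
  ∃ C : Set P, IsCap C ∧ ∀ c ∈ C, wedge p c → R q c

/-- Composition `▷ ∘ ⊐` with the star-above relation on `Q`. -/
def starAboveComp (R : Q → P → Prop) : Q → P → Prop :=
  fun q p => ∃ q', starBelow q' q ∧ R q' p

/-- A strong refiner: a `∧`-preserving refiner with `⊐ = ▷ * ⊐`. -/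
def IsStrongRefiner (R : Q → P → Prop) : Prop :=
  IsRefinerRel R ∧ WedgePres R ∧ ∀ q p, R q p ↔ relStar (starAboveComp R) q p

/-- `φ` is the continuous map associated to `R`, i.e. `φ(S) = S^{⊏ ⊲}`. -/
def specMapOf (R : Q → P → Prop) (φ : SpecT P → SpecT Q) : Prop :=
  ∀ S : SpecT P, (φ S).1 = {r : Q | ∃ p ∈ S.1, ∃ q, R q p ∧ starBelow q r}

/-- The relation `⊒_φ`: `q ⊒_φ p` iff `q̄_S ⊇ φ[p̄_S]`. -/
def relBarPhi (φ : SpecT P → SpecT Q) (q : Q) (p : P) : Prop :=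
  ∀ S : SpecT P, S ∈ pSBar p → φ S ∈ pSBar q

/-- The relation `⊐_φ`: `q ⊐_φ p` iff `q_S ⊇ φ[p̄_S]`. -/
def relPhi (φ : SpecT P → SpecT Q) (q : Q) (p : P) : Prop :=
  ∀ S : SpecT P, S ∈ pSBar p → φ S ∈ pSOpen q

/-- An arrow: a finite relation with `← ∘ ⌅` co-surjective. -/
def IsArrow (A : Q → P → Prop) : Prop :=
  {x : Q × P | A x.1 x.2}.Finite ∧ ∀ p : P, ∃ q p', A q p' ∧ barwedge p' p

/-- `A ≤ B` for relations: `A ⊆ ≤ ∘ B ∘ ≥`. -/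
def arrowLe (A B : Q → P → Prop) : Prop :=
  ∀ q p, A q p → ∃ q' p', q ≤ q' ∧ p ≤ p' ∧ B q' p'

/-- The relation `⟨←` of an arrow: `q ⟨← p` iff `p^{⌅→} ⊲ q`. -/
def angleRel (A : Q → P → Prop) (q : Q) (p : P) : Prop :=
  ∀ q', (∃ p', barwedge p p' ∧ A q' p') → starBelow q' q

/-- The relation `⋂ₙ (←ₙ)̄_S` on spectra determined by a sequence of arrows. -/
def seqGraph (A : ℕ → Q → P → Prop) (T : SpecT Q) (S : SpecT P) : Prop :=
  ∀ n, ∃ q p, A n q p ∧ T.1 ⊆ wedgeSet q ∧ S.1 ⊆ wedgeSet p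

end Refiners

end OP

/-!
The relation `⊐ = ⋃ₙ ⟨←ₙ` grows with `n`, so finitely many facts about it hold at a single
stage. For a minimal selector `S`, roundness gives `a ∈ S` such that every arrow target adjacent
to `a` has `S` in its `∧`-set; König's lemma then threads a decreasing sequence of such arrow
pairs, and the elements of `Q` wedging all their first coordinates form a selector. Hence every
`S` is related by `⋂ₙ (←ₙ)̄_S` to some `T`, and each such `T` contains `S^{⊏⊲}`. When `⊐` is a
refiner, `S^{⊏⊲}` is a selector, so minimality of `T` forces `T = S^{⊏⊲}`.

Conversely, if `⊐` fails to refine a cap `D`, take a minimal selector `S` of elements related to no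
`d ∈ D`, and `d ∈ T ∩ D` for the unique `T` over `S`. If some stage forces `q ⊲ d` for all of
its pairs over `S`, then `d ⊐ a` for the `a ∈ S` given by roundness; otherwise König's lemma
threads pairs with `¬ q ⊲ d`, producing a second `T` over `S` that avoids `d`.
-/

namespace OP

open Filter

section Levels

variable {P : Type*} [PartialOrder P]

theorem cone_subset_cone_succ : ∀ n, cone P n ⊆ cone P (n + 1)
  | 0 => fun _ hp q hq => absurd hq (hp q)
  | n + 1 => fun _ hp q hq => cone_subset_cone_succ n (hp q hq)

theorem cone_mono : Monotone (cone P) := monotone_nat_of_le_succ cone_subset_cone_succ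

theorem exists_le_mem_level {m : ℕ} {x : P} (hx : x ∈ cone P m) : ∃ y ≤ x, y ∈ level P m := by
  induction m with
  | zero => exact ⟨x, le_rfl, hx, fun y hy hyc => hyc x hy⟩
  | succ n ih =>
    by_cases hmin : ∀ y, y < x → y ∉ cone P (n + 1)
    · exact ⟨x, le_rfl, hx, hmin⟩
    push Not at hmin
    obtain ⟨z, hzx, hzc⟩ := hmin
    obtain ⟨y, hyx, hy⟩ := ih (hzc x hzx)
    by_cases hymin : ∀ w, w < y → w ∉ cone P (n + 1)
    · exact ⟨y, hyx, cone_subset_cone_succ n hy.1, hymin⟩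
    push Not at hymin
    obtain ⟨w, hwy, hwc⟩ := hymin
    -- `w` is minimal in `cone (n + 1)`: anything below it would put `w` in `cone n` below `y`
    exact ⟨w, hwy.le.trans hyx, hwc, fun v hv hvc => hy.2 w hwy (hvc w hv)⟩

theorem level_succ_refines (n : ℕ) : refines (level P (n + 1)) (level P n) := by
  intro p hp
  by_cases hpc : p ∈ cone P n
  · exact ⟨p, ⟨hpc, fun y hy hyc => hp.2 y hy (cone_subset_cone_succ n hyc)⟩, le_rfl⟩
  cases n with
  | zero =>
    obtain ⟨q, hq⟩ : ∃ q, p < q := by simpa [cone] using hpc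
    exact ⟨q, ⟨hp.1 q hq, fun z hz hzc => hzc q hz⟩, hq.le⟩
  | succ m =>
    obtain ⟨q, hq, hqm⟩ : ∃ q, p < q ∧ q ∉ cone P m := by
      by_contra! h
      exact hpc h
    exact ⟨q, ⟨hp.1 q hq, fun z hz hzc => hqm (hzc q hz)⟩, hq.le⟩

theorem refines.trans {A B C : Set P} (hAB : refines A B) (hBC : refines B C) : refines A C := by
  intro a ha
  obtain ⟨b, hb, hab⟩ := hAB a ha
  obtain ⟨c, hc, hbc⟩ := hBC b hb
  exact ⟨c, hc, hab.trans hbc⟩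

theorem level_refines {m n : ℕ} (h : m ≤ n) : refines (level P n) (level P m) := by
  induction h with
  | refl => exact fun a ha => ⟨a, ha, le_rfl⟩
  | step _ ih => exact (level_succ_refines _).trans ih

theorem isCap_level (n : ℕ) : IsCap (level P n) := ⟨n, fun a ha => ⟨a, ha, le_rfl⟩⟩

theorem IsCap.exists_finite_subset (hP : IsOmegaPoset P) {C : Set P} (hC : IsCap C) :
    ∃ C' ⊆ C, C'.Finite ∧ IsCap C' := by
  obtain ⟨n, hn⟩ := hC
  choose f hfC hf using hn
  have := (hP.1 n).to_subtype
  refine ⟨Set.range fun a : level P n => f a a.2, ?_, Set.finite_range _, n,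
    fun a ha => ⟨f a ha, ⟨⟨a, ha⟩, rfl⟩, hf a ha⟩⟩
  rintro _ ⟨a, rfl⟩
  exact hfC a a.2

theorem IsCap.inf {C D : Set P} (hC : IsCap C) (hD : IsCap D) :
    IsCap {x | (∃ c ∈ C, x ≤ c) ∧ ∃ d ∈ D, x ≤ d} := by
  obtain ⟨m, hm⟩ := hC
  obtain ⟨n, hn⟩ := hD
  refine ⟨max m n, fun a ha => ⟨a, ⟨?_, ?_⟩, le_rfl⟩⟩
  · obtain ⟨b, hb, hab⟩ := level_refines (le_max_left m n) a ha
    obtain ⟨c, hc, hbc⟩ := hm b hb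
    exact ⟨c, hc, hab.trans hbc⟩
  · obtain ⟨b, hb, hab⟩ := level_refines (le_max_right m n) a ha
    obtain ⟨d, hd, hbd⟩ := hn b hb
    exact ⟨d, hd, hab.trans hbd⟩

end Levels

section Wedge

variable {P : Type*} [PartialOrder P]

theorem wedge.symm {p q : P} (h : wedge p q) : wedge q p :=
  let ⟨r, hp, hq⟩ := h
  ⟨r, hq, hp⟩

theorem wedge_of_le {p q : P} (h : p ≤ q) : wedge p q := ⟨p, le_rfl, h⟩

theorem wedge.mono_left {p p' q : P} (h : wedge p q) (hp : p ≤ p') : wedge p' q :=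
  let ⟨r, hrp, hrq⟩ := h
  ⟨r, hrp.trans hp, hrq⟩

theorem wedge.mono_right {p q q' : P} (h : wedge p q) (hq : q ≤ q') : wedge p q' :=
  (h.symm.mono_left hq).symm

theorem wedgeSet_mono {p p' : P} (hp : p ≤ p') : wedgeSet p ⊆ wedgeSet p' :=
  fun _ h => wedge.mono_left h hp

theorem exists_mem_level_wedge (hP : IsOmegaPoset P) (m : ℕ) (x : P) :
    ∃ a ∈ level P m, wedge x a := by
  obtain ⟨j, hj⟩ := hP.2 x
  rcases le_total j m with h | h
  · obtain ⟨y, hyx, hy⟩ := exists_le_mem_level (cone_mono h hj)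
    exact ⟨y, hy, (wedge_of_le hyx).symm⟩
  · obtain ⟨y, hyx, hy⟩ := exists_le_mem_level hj
    obtain ⟨a, ha, hya⟩ := level_refines h y hy
    exact ⟨a, ha, y, hyx, hya⟩

theorem IsCap.exists_wedge (hP : IsOmegaPoset P) {C : Set P} (hC : IsCap C) (x : P) :
    ∃ c ∈ C, wedge x c := by
  obtain ⟨n, hn⟩ := hC
  obtain ⟨a, ha, hxa⟩ := exists_mem_level_wedge hP n x
  obtain ⟨c, hc, hac⟩ := hn a ha
  exact ⟨c, hc, hxa.mono_right hac⟩

theorem wedge.barwedge (hP : IsOmegaPoset P) {p q : P} (h : wedge p q) : barwedge p q := by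
  obtain ⟨r, hrp, hrq⟩ := h
  intro C hC
  obtain ⟨c, hc, u, hur, huc⟩ := hC.exists_wedge hP r
  exact ⟨c, hc, ⟨u, hur.trans hrp, huc⟩, ⟨u, huc, hur.trans hrq⟩⟩

theorem barwedge.symm {p q : P} (h : barwedge p q) : barwedge q p := fun C hC =>
  let ⟨c, hc, hpc, hcq⟩ := h C hC
  ⟨c, hc, hcq.symm, hpc.symm⟩

theorem barwedge.mono_right {p q q' : P} (h : barwedge p q) (hq : q ≤ q') : barwedge p q' :=
  fun C hC =>
  let ⟨c, hc, hpc, hcq⟩ := h C hC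
  ⟨c, hc, hpc, hcq.mono_right hq⟩

theorem barwedge.mono_left {p p' q : P} (h : barwedge p q) (hp : p ≤ p') : barwedge p' q :=
  (h.symm.mono_right hp).symm

end Wedge

section StarBelow

variable {P : Type*} [PartialOrder P]

theorem starBelowOn_level_mono {k k' : ℕ} {x y : P} (h : starBelowOn (level P k) x y)
    (hk : k ≤ k') : starBelowOn (level P k') x y := by
  intro e he hxe
  obtain ⟨f, hf, hef⟩ := level_refines hk e he
  exact hef.trans (h f hf (hxe.mono_right hef))

theorem eventually_starBelowOn_level {x y : P} (h : starBelow x y) :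
    ∀ᶠ k in atTop, starBelowOn (level P k) x y :=
  let ⟨k, hk⟩ := h
  eventually_atTop.2 ⟨k, fun _ hk' => starBelowOn_level_mono hk hk'⟩

theorem starBelow_of_le_of_starBelow {x x' y : P} (hx : x' ≤ x) (h : starBelow x y) :
    starBelow x' y :=
  let ⟨k, hk⟩ := h
  ⟨k, fun c hc hxc => hk c hc (hxc.mono_left hx)⟩

theorem starBelow.trans_le {x y y' : P} (h : starBelow x y) (hy : y ≤ y') : starBelow x y' :=
  let ⟨k, hk⟩ := h
  ⟨k, fun c hc hxc => (hk c hc hxc).trans hy⟩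

theorem starBelow.trans {x y z : P} (hxy : starBelow x y) (hyz : starBelow y z) :
    starBelow x z := by
  obtain ⟨k, hxy, hyz⟩ :=
    ((eventually_starBelowOn_level hxy).and (eventually_starBelowOn_level hyz)).exists
  exact ⟨k, fun e he hxe => hyz e he (wedge_of_le (hxy e he hxe)).symm⟩

theorem starBelow.wedge (hP : IsOmegaPoset P) {x y : P} (h : starBelow x y) : wedge x y := by
  obtain ⟨k, hk⟩ := h
  obtain ⟨e, he, hxe⟩ := exists_mem_level_wedge hP k x
  exact hxe.mono_right (hk e he hxe)

theorem wedge_of_starBelow_of_starBelow (hP : IsOmegaPoset P) {x y z : P}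
    (hy : starBelow x y) (hz : starBelow x z) : wedge y z := by
  obtain ⟨k, hky, hkz⟩ :=
    ((eventually_starBelowOn_level hy).and (eventually_starBelowOn_level hz)).exists
  obtain ⟨e, he, hxe⟩ := exists_mem_level_wedge hP k x
  exact ⟨e, hky e he hxe, hkz e he hxe⟩

theorem barwedge.wedge_of_starBelow {x a s : P} (hxa : barwedge x a) (has : starBelow a s) :
    wedge x s := by
  obtain ⟨k, hk⟩ := has
  obtain ⟨c, hc, hxc, hca⟩ := hxa (level P k) (isCap_level k)
  exact hxc.mono_right (hk c hc hca.symm)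

theorem IsRegular.exists_level_starBelow (hreg : IsRegular P) {D : Set P} (hD : IsCap D) :
    ∃ k, ∀ a ∈ level P k, ∃ d ∈ D, starBelow a d := by
  obtain ⟨m, hm⟩ := hD
  obtain ⟨n, -, hn⟩ := hreg m
  refine ⟨n, fun a ha => ?_⟩
  obtain ⟨b, hb, hab⟩ := hn a ha
  obtain ⟨d, hd, hbd⟩ := hm b hb
  exact ⟨d, hd, hab.trans_le hbd⟩

end StarBelow

namespace Spec

variable {P : Type*} [PartialOrder P] {S : Set P}

theorem exists_isCap_inter_eq_singleton (hS : S ∈ Spec P) {p : P} (hp : p ∈ S) :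
    ∃ C, IsCap C ∧ S ∩ C = {p} := by
  by_contra! h
  have hsel : IsSelector (S \ {p}) := by
    intro C hC
    obtain ⟨x, hx, hxp⟩ := Set.not_subset.1 (mt (hS.1 C hC).subset_singleton_iff.1 (h C hC))
    exact ⟨x, ⟨hx.1, hxp⟩, hx.2⟩
  have hp' : p ∈ S \ {p} := (hS.2 _ Set.sdiff_subset hsel).symm ▸ hp
  exact hp'.2 rfl

theorem mem_of_le (hS : S ∈ Spec P) {p q : P} (hp : p ∈ S) (hpq : p ≤ q) : q ∈ S := by
  obtain ⟨C, hC, hSC⟩ := exists_isCap_inter_eq_singleton hS hp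
  have hcap : IsCap ((C \ {p}) ∪ {q}) := by
    obtain ⟨n, hn⟩ := hC
    refine ⟨n, fun a ha => ?_⟩
    obtain ⟨c, hc, hac⟩ := hn a ha
    by_cases hcp : c = p
    · exact ⟨q, Or.inr rfl, hac.trans (hcp ▸ hpq)⟩
    · exact ⟨c, Or.inl ⟨hc, hcp⟩, hac⟩
  obtain ⟨x, hxS, hx | hx⟩ := hS.1 _ hcap
  · exact absurd (hSC ▸ ⟨hxS, hx.1⟩ : x ∈ ({p} : Set P)) hx.2
  · rwa [← hx]

theorem wedge (hS : S ∈ Spec P) {p q : P} (hp : p ∈ S) (hq : q ∈ S) : OP.wedge p q := by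
  obtain ⟨C, hC, hSC⟩ := exists_isCap_inter_eq_singleton hS hp
  obtain ⟨D, hD, hSD⟩ := exists_isCap_inter_eq_singleton hS hq
  obtain ⟨x, hxS, ⟨c, hc, hxc⟩, ⟨d, hd, hxd⟩⟩ := hS.1 _ (hC.inf hD)
  have hcp : c ∈ S ∩ C := ⟨mem_of_le hS hxS hxc, hc⟩
  have hdq : d ∈ S ∩ D := ⟨mem_of_le hS hxS hxd, hd⟩
  rw [hSC] at hcp
  rw [hSD] at hdq
  exact ⟨x, hxc.trans_eq hcp, hxd.trans_eq hdq⟩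

theorem subset_wedgeSet (hS : S ∈ Spec P) {q : P} (hq : q ∈ S) : S ⊆ wedgeSet q :=
  fun _ hs => Spec.wedge hS hq hs

theorem mem_of_starBelow (hS : S ∈ Spec P) {q r : P} (hSq : S ⊆ wedgeSet q)
    (hqr : starBelow q r) : r ∈ S := by
  obtain ⟨k, hk⟩ := hqr
  obtain ⟨t, htS, htk⟩ := hS.1 _ (isCap_level k)
  exact mem_of_le hS htS (hk t htk (hSq htS))

theorem eventually_starBelow (hreg : IsRegular P) (hS : S ∈ Spec P) {s : P} (hs : s ∈ S) :
    ∀ᶠ k in atTop, ∀ a ∈ S, a ∈ level P k → starBelow a s := by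
  obtain ⟨C, hC, hSC⟩ := exists_isCap_inter_eq_singleton hS hs
  obtain ⟨k, hk⟩ := hreg.exists_level_starBelow hC
  refine eventually_atTop.2 ⟨k, fun k' hk' a haS ha => ?_⟩
  obtain ⟨b, hb, hab⟩ := level_refines hk' a ha
  obtain ⟨c, hc, hbc⟩ := hk b hb
  have hcs : c ∈ S ∩ C :=
    ⟨mem_of_starBelow hS (subset_wedgeSet hS (mem_of_le hS haS hab)) hbc, hc⟩
  rw [hSC, Set.mem_singleton_iff] at hcs
  exact starBelow_of_le_of_starBelow hab (hcs ▸ hbc)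

theorem exists_forall_starBelow (hreg : IsRegular P) (hS : S ∈ Spec P) {ι : Type*} [Finite ι]
    (s : ι → P) (hs : ∀ i, s i ∈ S) : ∃ a ∈ S, ∀ i, starBelow a (s i) := by
  obtain ⟨k, hk⟩ := (eventually_all.2 fun i => eventually_starBelow hreg hS (hs i)).exists
  obtain ⟨a, haS, ha⟩ := hS.1 _ (isCap_level k)
  exact ⟨a, haS, fun i => hk i a haS ha⟩

theorem exists_forall_barwedge_subset_wedgeSet (hreg : IsRegular P) (hS : S ∈ Spec P)
    {F : Set P} (hF : F.Finite) : ∃ a ∈ S, ∀ p ∈ F, barwedge a p → S ⊆ wedgeSet p := by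
  let G := {p | p ∈ F ∧ ¬ S ⊆ wedgeSet p}
  have : Finite G := (hF.subset fun _ h => h.1).to_subtype
  choose y hyS hy using fun p : G => Set.not_subset.1 p.2.2
  obtain ⟨a, haS, ha⟩ := exists_forall_starBelow hreg hS y hyS
  exact ⟨a, haS, fun p hp hap => by_contra fun hpS =>
    hy ⟨p, hp, hpS⟩ (hap.symm.wedge_of_starBelow (ha _))⟩

end Spec

section Selectors

variable {P : Type*} [PartialOrder P]

theorem isSelector_sInter (hP : IsOmegaPoset P) {c : Set (Set P)}
    (hsel : ∀ T ∈ c, IsSelector T) (hc : IsChain (· ⊆ ·) c) (hne : c.Nonempty) :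
    IsSelector (⋂₀ c) := by
  intro C hC
  obtain ⟨C', hC'C, hC'fin, hC'⟩ := hC.exists_finite_subset hP
  obtain ⟨T₀, hT₀, hmin⟩ := Set.Finite.exists_minimalFor' (fun T => T ∩ C') c
    (hC'fin.powerset.subset (by rintro _ ⟨T, -, rfl⟩; exact Set.inter_subset_right)) hne
  obtain ⟨x, hxT₀, hxC'⟩ := hsel T₀ hT₀ C' hC'
  refine ⟨x, fun T hT => ?_, hC'C hxC'⟩
  rcases hc.total hT₀ hT with h | h
  · exact h hxT₀
  · exact (hmin hT (Set.inter_subset_inter_left _ h) ⟨hxT₀, hxC'⟩).1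

theorem exists_spec_subset (hP : IsOmegaPoset P) {N : Set P} (hN : IsSelector N) :
    ∃ S ∈ Spec P, S ⊆ N := by
  obtain ⟨S, hSN, hS⟩ := zorn_superset_nonempty {T | T ⊆ N ∧ IsSelector T}
    (fun c hc hchain hne => ⟨⋂₀ c,
      ⟨(Set.sInter_subset_of_mem hne.some_mem).trans (hc hne.some_mem).1,
        isSelector_sInter hP (fun T hT => (hc hT).2) hchain hne⟩,
      fun _ => Set.sInter_subset_of_mem⟩) N ⟨subset_rfl, hN⟩
  exact ⟨S, ⟨hS.prop.2, fun T hTS hT => hTS.antisymm (hS.2 ⟨hTS.trans hS.prop.1, hT⟩ hTS)⟩, hSN⟩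

theorem isSelector_setOf_forall_wedge (hP : IsOmegaPoset P) {q : ℕ → P} (hq : Antitone q)
    {U : Set P} (hU : IsLowerSet U) (h : ∀ n k, ∃ e ∈ level P k, wedge (q n) e ∧ e ∉ U) :
    IsSelector {e | (∀ n, wedge (q n) e) ∧ e ∉ U} := by
  rintro C ⟨k, hk⟩
  obtain ⟨e, he, hfreq⟩ :=
    (hP.1 k).frequently_exists.1 (Frequently.of_forall (f := atTop) fun n => h n k)
  obtain ⟨c, hc, hec⟩ := hk e he
  refine ⟨c, ⟨fun n => ?_, fun hcU => ?_⟩, hc⟩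
  · obtain ⟨m, hnm, hqm, -⟩ := frequently_atTop.1 hfreq n
    exact (hqm.mono_left (hq hnm)).mono_right hec
  · obtain ⟨m, -, -, heU⟩ := frequently_atTop.1 hfreq 0
    exact heU (hU hec hcU)

end Selectors

open CategoryTheory in
theorem exists_antitone_forall_mem {α : Type*} [Preorder α] (V : ℕ → Set α)
    (hfin : ∀ n, (V n).Finite) (hne : ∀ n, (V n).Nonempty)
    (hstep : ∀ n, ∀ x ∈ V (n + 1), ∃ y ∈ V n, x ≤ y) :
    ∃ g : ℕ → α, Antitone g ∧ ∀ n, g n ∈ V n := by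
  choose f hf using fun n (x : V (n + 1)) =>
    let ⟨y, hy, hxy⟩ := hstep n x x.2
    (⟨⟨y, hy⟩, hxy⟩ : ∃ y : V n, x.1 ≤ y.1)
  let F : ℕᵒᵖ ⥤ Type _ := Functor.ofOpSequence (X := fun n => V n) fun n => TypeCat.ofHom (f n)
  have (j : ℕᵒᵖ) : Finite (F.obj j) := (hfin j.unop).to_subtype
  have (j : ℕᵒᵖ) : Nonempty (F.obj j) := (hne j.unop).to_subtype
  obtain ⟨s, hs⟩ := nonempty_sections_of_finite_inverse_system F
  refine ⟨fun n => (s ⟨n⟩).1, antitone_nat_of_succ_le fun n => ?_, fun n => (s ⟨n⟩).2⟩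
  have hcomp := hs (homOfLE (Nat.le_add_right n 1)).op
  rw [Functor.ofOpSequence_map_homOfLE_succ] at hcomp
  have := hf n (s ⟨n + 1⟩)
  rwa [show f n (s ⟨n + 1⟩) = s ⟨n⟩ from hcomp] at this

section Arrows

variable {P Q : Type*} [PartialOrder P] [PartialOrder Q] {A : ℕ → Q → P → Prop}

theorem arrowLe.trans {B C D : Q → P → Prop} (hBC : arrowLe B C) (hCD : arrowLe C D) :
    arrowLe B D := by
  intro q p h
  obtain ⟨q', p', hq, hp, h'⟩ := hBC q p h
  obtain ⟨q'', p'', hq', hp', h''⟩ := hCD q' p' h'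
  exact ⟨q'', p'', hq.trans hq', hp.trans hp', h''⟩

theorem arrowLe_of_le (hdec : ∀ n, arrowLe (A (n + 1)) (A n)) {m n : ℕ} (h : n ≤ m) :
    arrowLe (A m) (A n) := by
  induction h with
  | refl => exact fun q p h => ⟨q, p, le_rfl, le_rfl, h⟩
  | step _ ih => exact (hdec _).trans ih

theorem angleRel.mono (hdec : ∀ n, arrowLe (A (n + 1)) (A n)) {m n : ℕ} {q : Q} {p : P}
    (h : angleRel (A m) q p) (hmn : m ≤ n) : angleRel (A n) q p := by
  rintro q' ⟨p', hpp', hA'⟩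
  obtain ⟨q'', p'', hq, hp, hA''⟩ := arrowLe_of_le hdec hmn q' p' hA'
  exact starBelow_of_le_of_starBelow hq (h q'' ⟨p'', hpp'.mono_right hp, hA''⟩)

/-- The relation `⊐ = ⋃ₙ ⟨←ₙ`. -/
def angleSeqRel (A : ℕ → Q → P → Prop) (q : Q) (p : P) : Prop := ∃ n, angleRel (A n) q p

theorem angleSeqRel.eventually (hdec : ∀ n, arrowLe (A (n + 1)) (A n)) {q : Q} {p : P}
    (h : angleSeqRel A q p) : ∀ᶠ n in atTop, angleRel (A n) q p :=
  let ⟨m, hm⟩ := h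
  eventually_atTop.2 ⟨m, fun _ hn => hm.mono hdec hn⟩

/-- The set `S^{⊏⊲}`. -/
def starImage (R : Q → P → Prop) (S : Set P) : Set Q :=
  {r | ∃ p ∈ S, ∃ q, R q p ∧ starBelow q r}

theorem isSelector_starImage (hregQ : IsRegular Q) {R : Q → P → Prop} (href : IsRefinerRel R)
    {S : Set P} (hS : IsSelector S) : IsSelector (starImage R S) := by
  intro D hD
  obtain ⟨k, hk⟩ := hregQ.exists_level_starBelow hD
  obtain ⟨B, hB, hBR⟩ := href (level Q k) (isCap_level k)
  obtain ⟨p, hpS, hpB⟩ := hS B hB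
  obtain ⟨a, ha, hRa⟩ := hBR p hpB
  obtain ⟨d, hd, had⟩ := hk a ha
  exact ⟨d, ⟨p, hpS, a, hRa, had⟩, hd⟩

theorem specMapOf.continuous {R : Q → P → Prop} {φ : SpecT P → SpecT Q} (h : specMapOf R φ) :
    Continuous φ := by
  refine continuous_generateFrom_iff.2 ?_
  rintro _ ⟨r, rfl⟩
  have hpre : φ ⁻¹' {T | r ∈ T.1} =
      ⋃ (x : Q × P) (_ : R x.1 x.2 ∧ starBelow x.1 r), pSOpen x.2 := by
    ext S
    simp only [Set.mem_preimage, Set.mem_ofPred_eq, h S, Set.mem_iUnion, pSOpen]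
    exact ⟨fun ⟨p, hp, q, hR, hqr⟩ => ⟨(q, p), ⟨hR, hqr⟩, hp⟩,
      fun ⟨⟨q, p⟩, ⟨hR, hqr⟩, hp⟩ => ⟨p, hp, q, hR, hqr⟩⟩
  rw [hpre]
  exact isOpen_iUnion fun x => isOpen_iUnion fun _ =>
    TopologicalSpace.isOpen_generateFrom_of_mem ⟨x.2, rfl⟩


theorem starImage_subset_of_seqGraph (hP : IsOmegaPoset P) {S : SpecT P} {T : SpecT Q}
    (h : seqGraph A T S) : starImage (angleSeqRel A) S.1 ⊆ T.1 := by
  rintro r ⟨p, hpS, q, ⟨n, hqp⟩, hqr⟩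
  obtain ⟨qt, pt, hA, hTq, hSp⟩ := h n
  have hqT : q ∈ T.1 :=
    Spec.mem_of_starBelow T.2 hTq (hqp qt ⟨pt, (hSp hpS).symm.barwedge hP, hA⟩)
  exact Spec.mem_of_starBelow T.2 (Spec.subset_wedgeSet T.2 hqT) hqr

theorem eq_starImage_of_seqGraph (hP : IsOmegaPoset P) (hregQ : IsRegular Q)
    (href : IsRefinerRel (angleSeqRel A)) {S : SpecT P} {T : SpecT Q} (h : seqGraph A T S) :
    T.1 = starImage (angleSeqRel A) S.1 :=
  (T.2.2 _ (starImage_subset_of_seqGraph hP h) (isSelector_starImage hregQ href S.2.1)).symm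

theorem exists_antitone_arrow_seq (hfin : ∀ n, {x : Q × P | A n x.1 x.2}.Finite)
    (hdec : ∀ n, arrowLe (A (n + 1)) (A n)) {X : Set (Q × P)} (hX : IsUpperSet X)
    (hne : ∀ n, ∃ x ∈ X, A n x.1 x.2) :
    ∃ g : ℕ → Q × P, Antitone g ∧ ∀ n, g n ∈ X ∧ A n (g n).1 (g n).2 := by
  refine exists_antitone_forall_mem (fun n => {x | x ∈ X ∧ A n x.1 x.2})
    (fun n => (hfin n).subset fun _ h => h.2) hne ?_
  rintro n x ⟨hxX, hxA⟩
  obtain ⟨q, p, hq, hp, hA⟩ := hdec n x.1 x.2 hxA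
  exact ⟨(q, p), ⟨hX ⟨hq, hp⟩ hxX, hA⟩, hq, hp⟩

theorem exists_seqGraph_of_antitone (hQ : IsOmegaPoset Q) {S : SpecT P} {g : ℕ → Q × P}
    (hg : Antitone g) (hgA : ∀ n, A n (g n).1 (g n).2) (hgS : ∀ n, S.1 ⊆ wedgeSet (g n).2)
    {U : Set Q} (hU : IsLowerSet U) (hgU : ∀ n k, ∃ e ∈ level Q k, wedge (g n).1 e ∧ e ∉ U) :
    ∃ T : SpecT Q, seqGraph A T S ∧ Disjoint T.1 U := by
  obtain ⟨T, hT, hTW⟩ :=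
    exists_spec_subset hQ (isSelector_setOf_forall_wedge hQ (monotone_fst.comp_antitone hg) hU hgU)
  exact ⟨⟨T, hT⟩, fun n => ⟨(g n).1, (g n).2, hgA n, fun e he => (hTW he).1 n, hgS n⟩,
    Set.disjoint_left.2 fun e he => (hTW he).2⟩


theorem exists_seqGraph (hregP : IsRegular P) (hQ : IsOmegaPoset Q) (hA : ∀ n, IsArrow (A n))
    (hdec : ∀ n, arrowLe (A (n + 1)) (A n)) (S : SpecT P) : ∃ T : SpecT Q, seqGraph A T S := by
  have hne (n : ℕ) : ∃ x ∈ {x : Q × P | S.1 ⊆ wedgeSet x.2}, A n x.1 x.2 := by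
    obtain ⟨a, -, ha⟩ := Spec.exists_forall_barwedge_subset_wedgeSet hregP S.2
      ((hA n).1.image Prod.snd)
    obtain ⟨q, p, hqp, hpa⟩ := (hA n).2 a
    exact ⟨(q, p), ha p ⟨(q, p), hqp, rfl⟩ hpa.symm, hqp⟩
  obtain ⟨g, hg, hgX⟩ := exists_antitone_arrow_seq (X := {x | S.1 ⊆ wedgeSet x.2})
    (fun n => (hA n).1) hdec (fun _ _ hxy hx => hx.trans (wedgeSet_mono hxy.2)) hne
  obtain ⟨T, hT, -⟩ := exists_seqGraph_of_antitone hQ hg (fun n => (hgX n).2) (fun n => (hgX n).1)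
    isLowerSet_empty fun n k =>
      let ⟨e, he, hqe⟩ := exists_mem_level_wedge hQ k (g n).1
      ⟨e, he, hqe, Set.notMem_empty e⟩
  exact ⟨T, hT⟩

theorem seqGraph_iff_eq_starImage (hP : IsOmegaPoset P) (hregP : IsRegular P)
    (hQ : IsOmegaPoset Q) (hregQ : IsRegular Q) (hA : ∀ n, IsArrow (A n))
    (hdec : ∀ n, arrowLe (A (n + 1)) (A n)) (href : IsRefinerRel (angleSeqRel A))
    (S : SpecT P) (T : SpecT Q) : seqGraph A T S ↔ T.1 = starImage (angleSeqRel A) S.1 := by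
  refine ⟨eq_starImage_of_seqGraph hP hregQ href, fun hT => ?_⟩
  obtain ⟨T', hT'⟩ := exists_seqGraph hregP hQ hA hdec S
  rwa [Subtype.ext (hT.trans (eq_starImage_of_seqGraph hP hregQ href hT').symm)]

theorem exists_arrow_starBelow_of_seqGraph_unique (hQ : IsOmegaPoset Q)
    (hA : ∀ n, IsArrow (A n)) (hdec : ∀ n, arrowLe (A (n + 1)) (A n)) {S : SpecT P}
    {T : SpecT Q} (huniq : ∀ T', seqGraph A T' S → T' = T) {d : Q} (hd : d ∈ T.1) :
    ∃ n, ∀ q p, A n q p → S.1 ⊆ wedgeSet p → starBelow q d := by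
  by_contra! h
  obtain ⟨g, hg, hgX⟩ :=
    exists_antitone_arrow_seq (X := {x | S.1 ⊆ wedgeSet x.2 ∧ ¬ starBelow x.1 d})
      (fun n => (hA n).1) hdec
      (fun _ _ hxy hx => ⟨hx.1.trans (wedgeSet_mono hxy.2),
        fun hy => hx.2 (starBelow_of_le_of_starBelow hxy.1 hy)⟩)
      (fun n => let ⟨q, p, hqp, hSp, hqd⟩ := h n; ⟨(q, p), ⟨hSp, hqd⟩, hqp⟩)
  obtain ⟨T', hT', hdisj⟩ := exists_seqGraph_of_antitone hQ hg (fun n => (hgX n).2)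
    (fun n => (hgX n).1.1) (isLowerSet_Iic d) fun n k => by
      by_contra! hk
      exact (hgX n).1.2 ⟨k, hk⟩
  exact Set.disjoint_left.1 hdisj (huniq T' hT' ▸ hd) le_rfl

theorem isRefinerRel_of_existsUnique (hP : IsOmegaPoset P) (hregP : IsRegular P)
    (hQ : IsOmegaPoset Q) (hA : ∀ n, IsArrow (A n)) (hdec : ∀ n, arrowLe (A (n + 1)) (A n))
    (H : ∀ S : SpecT P, ∃! T : SpecT Q, seqGraph A T S) : IsRefinerRel (angleSeqRel A) := by
  intro D hD
  by_contra! hbad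
  obtain ⟨S, hS, hSbad⟩ := exists_spec_subset hP (N := {b | ∀ c ∈ D, ¬ angleSeqRel A c b})
    fun B hB => let ⟨b, hb, hbD⟩ := hbad B hB; ⟨b, hbD, hb⟩
  obtain ⟨T, -, huniq⟩ := H ⟨S, hS⟩
  obtain ⟨d, hdT, hdD⟩ := T.2.1 D hD
  obtain ⟨n, hn⟩ := exists_arrow_starBelow_of_seqGraph_unique hQ hA hdec huniq hdT
  obtain ⟨a, haS, ha⟩ := Spec.exists_forall_barwedge_subset_wedgeSet hregP hS
    ((hA n).1.image Prod.snd)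
  exact hSbad haS d hdD ⟨n, fun q ⟨p, hap, hqp⟩ => hn q p hqp (ha p ⟨(q, p), hqp, rfl⟩ hap)⟩

theorem wedgePres_angleSeqRel (hQ : IsOmegaPoset Q) (hA : ∀ n, IsArrow (A n))
    (hdec : ∀ n, arrowLe (A (n + 1)) (A n)) : WedgePres (angleSeqRel A) := by
  rintro q p p' q' hqp ⟨u, hup, hup'⟩ hqp'
  obtain ⟨N, hN, hN'⟩ := ((hqp.eventually hdec).and (hqp'.eventually hdec)).exists
  obtain ⟨qh, ph, hAh, hph⟩ := (hA N).2 u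
  exact wedge_of_starBelow_of_starBelow hQ (hN qh ⟨ph, hph.symm.mono_left hup, hAh⟩)
    (hN' qh ⟨ph, hph.symm.mono_left hup', hAh⟩)

theorem angleSeqRel_of_relStar (hP : IsOmegaPoset P) (hdec : ∀ n, arrowLe (A (n + 1)) (A n))
    {q : Q} {p : P} (h : relStar (starAboveComp (angleSeqRel A)) q p) : angleSeqRel A q p := by
  obtain ⟨C, hC, hCp⟩ := h
  obtain ⟨C', hC'C, hC'fin, hC'⟩ := hC.exists_finite_subset hP
  have hev : ∀ c ∈ {c ∈ C' | wedge p c},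
      ∀ᶠ n in atTop, ∃ q₀, starBelow q₀ q ∧ angleRel (A n) q₀ c := by
    rintro c ⟨hc, hpc⟩
    obtain ⟨q₀, hq₀, hR⟩ := hCp c (hC'C hc) hpc
    exact (hR.eventually hdec).mono fun n hn => ⟨q₀, hq₀, hn⟩
  obtain ⟨N, hN⟩ := ((hC'fin.sep _).eventually_all.2 hev).exists
  refine ⟨N, fun q' ⟨p', hpp', hA'⟩ => ?_⟩
  obtain ⟨c, hc, hpc, hcp'⟩ := hpp' C' hC'
  obtain ⟨q₀, hq₀, hR⟩ := hN c ⟨hc, hpc⟩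
  exact (hR q' ⟨p', hcp'.barwedge hP, hA'⟩).trans hq₀

theorem relStar_of_angleSeqRel (hQ : IsOmegaPoset Q) (hregQ : IsRegular Q)
    (hA : ∀ n, IsArrow (A n)) (hdec : ∀ n, arrowLe (A (n + 1)) (A n))
    (href : IsRefinerRel (angleSeqRel A)) {q : Q} {p : P} (h : angleSeqRel A q p) :
    relStar (starAboveComp (angleSeqRel A)) q p := by
  obtain ⟨n, hn⟩ := h
  have hfin : {x : Q × P | A n x.1 x.2 ∧ barwedge p x.2}.Finite := (hA n).1.subset fun _ h => h.1
  obtain ⟨K, hK⟩ := (hfin.eventually_all.2 fun x hx =>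
    eventually_starBelowOn_level (hn x.1 ⟨x.2, hx.2, hx.1⟩)).exists
  obtain ⟨j, -, hj⟩ := hregQ K
  obtain ⟨B, hB, hBR⟩ := href (level Q j) (isCap_level j)
  refine ⟨B, hB, fun c hc hpc => ?_⟩
  obtain ⟨d, hd, hdc⟩ := hBR c hc
  obtain ⟨w, hw, hdw⟩ := hj d hd
  obtain ⟨u, hup, huc⟩ := hpc
  obtain ⟨N, hnN, hN⟩ := ((eventually_ge_atTop n).and (hdc.eventually hdec)).exists
  obtain ⟨qh, ph, hAh, hph⟩ := (hA N).2 u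
  obtain ⟨q₁, p₁, hq₁, hp₁, hA₁⟩ := arrowLe_of_le hdec hnN qh ph hAh
  have hqhw : starBelow qh w := (hN qh ⟨ph, hph.symm.mono_left huc, hAh⟩).trans hdw
  have hwq : w ≤ q := hK (q₁, p₁) ⟨hA₁, (hph.symm.mono_left hup).mono_right hp₁⟩ w hw
    ((hqhw.wedge hQ).mono_left hq₁)
  exact ⟨d, hdw.trans_le hwq, hdc⟩

end Arrows

end OP

open OP in
/-- For a thin arrow-sequence, `⊐ = ⋃ₙ ⟨←ₙ` is a strong refiner whose associated
continuous map is `φ = ⋂ₙ (←ₙ)̄_S`; `⊐` is a refiner iff `φ` is a function, and then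
`φ = S_⊐` is continuous. -/
theorem stmt10 {P Q : Type*} [PartialOrder P] [PartialOrder Q]
    (hP : IsOmegaPoset P) (hregP : IsRegular P) (hQ : IsOmegaPoset Q) (hregQ : IsRegular Q)
    (A : ℕ → Q → P → Prop) (hA : ∀ n, IsArrow (A n)) (hdec : ∀ n, arrowLe (A (n + 1)) (A n)) :
    (IsRefinerRel (fun q p => ∃ n, angleRel (A n) q p) ↔
      ∀ S : SpecT P, ∃! T : SpecT Q, seqGraph A T S) ∧
    (IsRefinerRel (fun q p => ∃ n, angleRel (A n) q p) →
      IsStrongRefiner (fun q p => ∃ n, angleRel (A n) q p) ∧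
      ∃ φ : SpecT P → SpecT Q, Continuous φ ∧
        specMapOf (fun q p => ∃ n, angleRel (A n) q p) φ ∧
        ∀ (S : SpecT P) (T : SpecT Q), seqGraph A T S ↔ T = φ S) := by
  have hgraph := seqGraph_iff_eq_starImage hP hregP hQ hregQ hA hdec
  refine ⟨⟨fun href S => ?_, isRefinerRel_of_existsUnique hP hregP hQ hA hdec⟩, fun href => ?_⟩
  · obtain ⟨T, hT⟩ := exists_seqGraph hregP hQ hA hdec S
    exact ⟨T, hT, fun T' hT' =>
      Subtype.ext (((hgraph href S T').1 hT').trans ((hgraph href S T).1 hT).symm)⟩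
  have hφ (S : SpecT P) : starImage (angleSeqRel A) S.1 ∈ Spec Q := by
    obtain ⟨T, hT⟩ := exists_seqGraph hregP hQ hA hdec S
    exact (hgraph href S T).1 hT ▸ T.2
  have hmap : specMapOf (angleSeqRel A) fun S => ⟨_, hφ S⟩ := fun _ => rfl
  refine ⟨⟨href, wedgePres_angleSeqRel hQ hA hdec, fun q p =>
    ⟨relStar_of_angleSeqRel hQ hregQ hA hdec href, angleSeqRel_of_relStar hP hdec⟩⟩,
    _, hmap.continuous, hmap,
    fun S T => (hgraph href S T).trans ⟨fun h => Subtype.ext h, congrArg Subtype.val⟩⟩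
end

section
/- In the category P of finite paths with edge-preserving co-bijective relations as morphisms, the non-edge-injective morphisms form an ideal: for any ⊐ ∈ P^R_Q and ⊵ ∈ P^S_R, if either ⊐ or ⊵ fails to be edge-injective then so does the composition ⊵ ∘ ⊐. -/
/-!
Suppose `T ∘ R` is edge-injective. Over each end `k` of an edge `k l` of the domain, the fibre
of `R` is a single vertex: two vertices `i ≠ i'` over `k` would be adjacent, every vertex over
`l` would coincide with one of them, and so the unique vertex of `T ∘ R` over `k` would also lie
over `l`. This already makes `R` edge-injective. Choosing one vertex over each point turns `R`
into an edge-preserving surjection of paths, and by a discrete intermediate value argument every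
edge `i i'` of its codomain is the image of an edge `K L` of the domain. The fibres of `R` over
`K`, `L` are then `{i}`, `{i'}`, so the fibres of `T` over `i`, `i'` are those of `T ∘ R` over
`K`, `L`, and `T` is edge-injective too.
-/

namespace PathCat

/-- The edge relation on the standard path `P_n` with vertices `Fin (n+1)`:
`i ⊓ j` iff `|i − j| ≤ 1` (reflexive and symmetric). -/
def AdjF {n : ℕ} (i j : Fin (n + 1)) : Prop := (i : ℕ) ≤ (j : ℕ) + 1 ∧ (j : ℕ) ≤ (i : ℕ) + 1

/-- Edge-preserving relation (as a subset of codomain × domain):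
`⊐ ∘ ⊓ ∘ ⊏ ⊆ ⊓`. -/
def EdgePresRel {m n : ℕ} (R : Fin (n + 1) → Fin (m + 1) → Prop) : Prop :=
  ∀ i j k l, R i k → AdjF k l → R j l → AdjF i j

/-- Co-surjective: every element of the domain is related to something. -/
def CoSurjRel {m n : ℕ} (R : Fin (n + 1) → Fin (m + 1) → Prop) : Prop := ∀ k, ∃ i, R i k

/-- Co-injective: every element of the codomain is the sole image of some element. -/
def CoInjRel {m n : ℕ} (R : Fin (n + 1) → Fin (m + 1) → Prop) : Prop :=
  ∀ i, ∃ k, ∀ i', R i' k ↔ i' = i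

/-- A morphism of the path category `P`: an edge-preserving co-bijective relation
from `P_m` to `P_n` (subset of `P_n × P_m`). -/
def IsMorRel {m n : ℕ} (R : Fin (n + 1) → Fin (m + 1) → Prop) : Prop :=
  EdgePresRel R ∧ CoSurjRel R ∧ CoInjRel R

/-- Relational composition. -/
def compRel {m n l : ℕ} (S : Fin (l + 1) → Fin (n + 1) → Prop)
    (R : Fin (n + 1) → Fin (m + 1) → Prop) : Fin (l + 1) → Fin (m + 1) → Prop :=
  fun a c => ∃ b, S a b ∧ R b c

/-- Isomorphism in the path category. -/
def IsIsoRel {m n : ℕ} (R : Fin (n + 1) → Fin (m + 1) → Prop) : Prop :=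
  IsMorRel R ∧ ∃ S : Fin (m + 1) → Fin (n + 1) → Prop, IsMorRel S ∧
    (∀ a c, compRel R S a c ↔ a = c) ∧ (∀ a c, compRel S R a c ↔ a = c)

/-- Prime morphism: not an isomorphism, but any factorization into two morphisms
forces one factor to be an isomorphism. -/
def IsPrimeRel {m n : ℕ} (R : Fin (n + 1) → Fin (m + 1) → Prop) : Prop :=
  IsMorRel R ∧ ¬ IsIsoRel R ∧
    ∀ (k : ℕ) (S : Fin (n + 1) → Fin (k + 1) → Prop) (T : Fin (k + 1) → Fin (m + 1) → Prop),
      IsMorRel S → IsMorRel T → (∀ a c, R a c ↔ compRel S T a c) → IsIsoRel S ∨ IsIsoRel T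

/-- Edge-injective morphism: on every edge of the domain, the relation restricts to
an injective function with distinct singleton images. -/
def EdgeInjRel {m n : ℕ} (R : Fin (n + 1) → Fin (m + 1) → Prop) : Prop :=
  ∀ k l : Fin (m + 1), AdjF k l → k ≠ l →
    ∃ i j, i ≠ j ∧ (∀ i', R i' k ↔ i' = i) ∧ (∀ j', R j' l ↔ j' = j)

/-- Morphisms of the category `F`: edge-preserving surjective functions. -/
def IsMorF {m n : ℕ} (f : Fin (m + 1) → Fin (n + 1)) : Prop :=
  Function.Surjective f ∧ ∀ a b, AdjF a b → AdjF (f a) (f b)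

/-- Isomorphism in `F`. -/
def IsIsoF {m n : ℕ} (f : Fin (m + 1) → Fin (n + 1)) : Prop :=
  IsMorF f ∧ ∃ g : Fin (n + 1) → Fin (m + 1), IsMorF g ∧
    (∀ a, g (f a) = a) ∧ ∀ b, f (g b) = b

/-- Prime morphism in `F`. -/
def IsPrimeF {m n : ℕ} (f : Fin (m + 1) → Fin (n + 1)) : Prop :=
  IsMorF f ∧ ¬ IsIsoF f ∧
    ∀ (k : ℕ) (g : Fin (k + 1) → Fin (n + 1)) (h : Fin (m + 1) → Fin (k + 1)),
      IsMorF g → IsMorF h → (∀ a, f a = g (h a)) → IsIsoF g ∨ IsIsoF h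

/-- An edge-injective morphism of paths: an edge-preserving surjective function
mapping each edge of the domain onto an edge of the codomain. -/
def IsEdgeInjFun {m n : ℕ} (f : Fin (m + 1) → Fin (n + 1)) : Prop :=
  Function.Surjective f ∧ (∀ a b : Fin (m + 1), AdjF a b → AdjF (f a) (f b)) ∧
    ∀ a b : Fin (m + 1), (a : ℕ) + 1 = (b : ℕ) → f a ≠ f b

/-- The turning number: the number of length-two subpaths mapped onto an edge. -/
noncomputable def turningNumber {m n : ℕ} (f : Fin (m + 1) → Fin (n + 1)) : ℕ :=
  Set.ncard {b : Fin (m + 1) | ∃ a c : Fin (m + 1),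
    (a : ℕ) + 1 = (b : ℕ) ∧ (b : ℕ) + 1 = (c : ℕ) ∧ f a = f c}

/-- Proper function: no restriction to a proper subpath is still surjective. -/
def ProperFun {m n : ℕ} (f : Fin (m + 1) → Fin (n + 1)) : Prop :=
  ∀ a b : Fin (m + 1), a ≤ b → (∀ j, ∃ k, a ≤ k ∧ k ≤ b ∧ f k = j) →
    ((a : ℕ) = 0 ∧ (b : ℕ) = m)

/-- Composite of a chain of morphisms `F i : P_{d i} → P_{d (i+1)}`. -/
def chainComp (d : ℕ → ℕ) (F : ∀ i : ℕ, Fin (d (i + 1) + 1) → Fin (d i + 1) → Prop) :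
    ∀ k : ℕ, Fin (d k + 1) → Fin (d 0 + 1) → Prop
  | 0 => fun a c => a = c
  | k + 1 => fun a c => ∃ b, F k a b ∧ chainComp d F k b c

end PathCat

theorem Nat.exists_not_iff_succ {p : ℕ → Prop} {a b : ℕ} (ha : p a) (hb : ¬ p b) :
    ∃ s, ¬ (p s ↔ p (s + 1)) := by
  by_contra! h
  have hconst : ∀ t, p t ↔ p 0 := by
    intro t
    induction t with
    | zero => rfl
    | succ t ih => exact (h t).symm.trans ih
  exact hb ((hconst b).2 ((hconst a).1 ha))

namespace PathCat

section Adjacency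

variable {n : ℕ}

theorem adjF_refl (i : Fin (n + 1)) : AdjF i i := ⟨by omega, by omega⟩

theorem AdjF.symm {i j : Fin (n + 1)} (h : AdjF i j) : AdjF j i := ⟨h.2, h.1⟩

theorem AdjF.eq_or_eq_of_adjF {i i' j : Fin (n + 1)} (h : AdjF i i') (hne : i ≠ i')
    (hj : AdjF i j) (hj' : AdjF i' j) : j = i ∨ j = i' := by
  have hne' : (i : ℕ) ≠ i' := Fin.val_ne_of_ne hne
  obtain ⟨h₁, h₂⟩ := h
  obtain ⟨hj₁, hj₂⟩ := hj
  obtain ⟨hj'₁, hj'₂⟩ := hj'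
  omega

end Adjacency

theorem exists_adjF_map_eq {m n : ℕ} (F : Fin (m + 1) → Fin (n + 1))
    (hF : ∀ k l, AdjF k l → AdjF (F k) (F l)) (hsurj : Function.Surjective F)
    {i i' : Fin (n + 1)} (h : AdjF i i') : ∃ K L, AdjF K L ∧ F K = i ∧ F L = i' := by
  wlog hle : (i : ℕ) ≤ i' generalizing i i'
  · obtain ⟨K, L, hKL, hK, hL⟩ := this h.symm (by omega)
    exact ⟨L, K, hKL.symm, hL, hK⟩
  obtain ⟨k, rfl⟩ := hsurj i
  obtain ⟨k', rfl⟩ := hsurj i'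
  rcases eq_or_lt_of_le hle with heq | hlt
  · exact ⟨k, k, adjF_refl k, rfl, Fin.ext heq⟩
  -- Extending `F` to `ℕ` by clamping, the crossing found below is automatically in range.
  let c : ℕ → Fin (m + 1) := fun t => ⟨min t m, by omega⟩
  have hc : ∀ k : Fin (m + 1), c k = k := fun k => Fin.ext (min_eq_left (by omega))
  have hcs : ∀ s, AdjF (c s) (c (s + 1)) := fun s =>
    ⟨by simp only [c]; omega, by simp only [c]; omega⟩
  obtain ⟨s, hs⟩ := Nat.exists_not_iff_succ (p := fun t => (F (c t) : ℕ) ≤ F k)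
    (a := k) (b := k') (by simp only [hc, le_refl]) (by simp only [hc]; omega)
  have hs : ¬ ((F (c s) : ℕ) ≤ F k ↔ (F (c (s + 1)) : ℕ) ≤ F k) := hs
  obtain ⟨h₁, h₂⟩ := hF _ _ (hcs s)
  have hk' : (F k' : ℕ) = F k + 1 := by obtain ⟨_, _⟩ := h; omega
  by_cases hlo : (F (c s) : ℕ) ≤ F k
  · exact ⟨c s, c (s + 1), hcs s, Fin.ext (by omega), Fin.ext (by omega)⟩
  · exact ⟨c (s + 1), c s, (hcs s).symm, Fin.ext (by omega), Fin.ext (by omega)⟩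

section Composition

variable {m n l : ℕ} {R : Fin (n + 1) → Fin (m + 1) → Prop} {T : Fin (l + 1) → Fin (n + 1) → Prop}

theorem compRel_iff_of_fiber {k : Fin (m + 1)} {i : Fin (n + 1)} (hk : ∀ i', R i' k ↔ i' = i)
    (a : Fin (l + 1)) : compRel T R a k ↔ T a i := by
  simp only [compRel, hk, exists_eq_right]

theorem rel_of_compRel_fiber (hTS : CoSurjRel T) {k : Fin (m + 1)} {a : Fin (l + 1)}
    (ha : ∀ a', compRel T R a' k ↔ a' = a) {i : Fin (n + 1)} (hi : R i k) : T a i := by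
  obtain ⟨a', ha'⟩ := hTS i
  exact (ha a').1 ⟨i, ha', hi⟩ ▸ ha'

theorem fiber_eq_of_edgeInjRel_compRel (hRE : EdgePresRel R) (hRS : CoSurjRel R)
    (hTS : CoSurjRel T) (hC : EdgeInjRel (compRel T R)) {k k' : Fin (m + 1)} (hkk' : AdjF k k')
    (hne : k ≠ k') {i : Fin (n + 1)} (hi : R i k) (i' : Fin (n + 1)) : R i' k ↔ i' = i := by
  refine ⟨fun hi' => ?_, fun h => h ▸ hi⟩
  by_contra hii
  obtain ⟨a, b, hab, ha, hb⟩ := hC k k' hkk' hne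
  obtain ⟨j, hj⟩ := hRS k'
  have hj' : j = i' ∨ j = i :=
    (hRE _ _ k k hi' (adjF_refl k) hi).eq_or_eq_of_adjF hii (hRE _ _ k k' hi' hkk' hj)
      (hRE _ _ k k' hi hkk' hj)
  have hTa : T a j := by
    rcases hj' with rfl | rfl <;> exact rel_of_compRel_fiber hTS ha ‹_›
  exact hab ((hb a).1 ⟨j, hTa, hj⟩)

theorem EdgeInjRel.of_compRel_right (hRE : EdgePresRel R) (hRS : CoSurjRel R)
    (hTS : CoSurjRel T) (hC : EdgeInjRel (compRel T R)) : EdgeInjRel R := by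
  intro k k' hkk' hne
  obtain ⟨i, hi⟩ := hRS k
  obtain ⟨i', hi'⟩ := hRS k'
  refine ⟨i, i', ?_, fiber_eq_of_edgeInjRel_compRel hRE hRS hTS hC hkk' hne hi,
    fiber_eq_of_edgeInjRel_compRel hRE hRS hTS hC hkk'.symm hne.symm hi'⟩
  rintro rfl
  obtain ⟨a, b, hab, ha, hb⟩ := hC k k' hkk' hne
  exact hab ((hb a).1 ⟨i, rel_of_compRel_fiber hTS ha hi, hi'⟩)

theorem EdgeInjRel.of_compRel_left (hR : IsMorRel R) (hTS : CoSurjRel T)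
    (hC : EdgeInjRel (compRel T R)) : EdgeInjRel T := by
  obtain ⟨hRE, hRS, hRI⟩ := hR
  obtain ⟨F, hF⟩ := Classical.axiomOfChoice hRS
  have hFsurj : Function.Surjective F := fun i =>
    let ⟨k, hk⟩ := hRI i
    ⟨k, (hk (F k)).1 (hF k)⟩
  intro i i' hii' hne
  obtain ⟨K, L, hKL, rfl, rfl⟩ :=
    exists_adjF_map_eq F (fun k l hkl => hRE _ _ k l (hF k) hkl (hF l)) hFsurj hii'
  have hKL' : K ≠ L := fun h => hne (h ▸ rfl)
  obtain ⟨a, b, hab, ha, hb⟩ := hC K L hKL hKL'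
  have hK := compRel_iff_of_fiber (T := T)
    (fiber_eq_of_edgeInjRel_compRel hRE hRS hTS hC hKL hKL' (hF K))
  have hL := compRel_iff_of_fiber (T := T)
    (fiber_eq_of_edgeInjRel_compRel hRE hRS hTS hC hKL.symm hKL'.symm (hF L))
  exact ⟨a, b, hab, fun a' => (hK a').symm.trans (ha a'), fun b' => (hL b').symm.trans (hb b')⟩

end Composition

end PathCat

open PathCat in
/-- The non-edge-injective morphisms form an ideal in the path category. -/
theorem stmt15 {m n l : ℕ} (R : Fin (n + 1) → Fin (m + 1) → Prop)
    (T : Fin (l + 1) → Fin (n + 1) → Prop) (hR : IsMorRel R) (hT : IsMorRel T)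
    (h : ¬ EdgeInjRel R ∨ ¬ EdgeInjRel T) : ¬ EdgeInjRel (compRel T R) := by
  intro hC
  rcases h with hR' | hT'
  · exact hR' (EdgeInjRel.of_compRel_right hR.1 hR.2.1 hT.2.1 hC)
  · exact hT' (EdgeInjRel.of_compRel_left hR hT.2.1 hC)
end

section
/- For edge-injective morphisms f : Q → R and g : R → S between finite paths, the turning number satisfies t(g ∘ f) ≥ t(g) + t(f), where t(h) counts the subpaths D of the domain of length two such that h restricted to D is a turn (an edge-injective map from a length-two path onto an edge). -/
/-! Every turn of `f` is a turn of `g ∘ f`. Moreover, at a turn of `g` the middle path has an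
interior vertex `c`, and since `f` is surjective and moves exactly one step along every edge, it
passes straight through `c` somewhere, from `c - 1` to `c + 1` or back; there `f` does not turn but
`g ∘ f` does. That vertex is mapped to `c` by `f`, so distinct turns of `g` give distinct
vertices. -/

section UnitStepWalk

variable {w : ℕ → ℤ} {s t : ℕ} {c : ℤ}

theorem exists_upcrossing_of_abs_step_eq_one (hstep : ∀ i < t, |w (i + 1) - w i| = 1)
    (hst : s ≤ t) (hs : w s < c) (ht : c < w t) :
    ∃ i, i + 2 ≤ t ∧ w i = c - 1 ∧ w (i + 1) = c ∧ w (i + 2) = c + 1 := by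
  classical
  have below := Nat.findGreatest_spec (P := fun j => w j < c) hst hs
  have above : ∀ j, Nat.findGreatest (fun j => w j < c) t < j → j ≤ t → c ≤ w j :=
    fun j hij hjt => not_lt.1 (Nat.findGreatest_is_greatest hij hjt)
  have hle := Nat.findGreatest_le (P := fun j => w j < c) t
  -- `i` is the last time up to `t` at which the walk is below `c`.
  generalize Nat.findGreatest (fun j => w j < c) t = i at below above hle
  have hit : i ≠ t := by rintro rfl; omega
  have step₀ := (abs_eq zero_le_one).1 (hstep i (by omega))
  have at₁ := above (i + 1) (by omega) (by omega)
  have hi₁t : i + 1 ≠ t := by rintro rfl; omega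
  have step₁ : |w (i + 2) - w (i + 1)| = 1 := hstep (i + 1) (by omega)
  rw [abs_eq zero_le_one] at step₁
  have at₂ := above (i + 2) (by omega) (by omega)
  exact ⟨i, by omega, by omega, by omega, by omega⟩

theorem exists_crossing_of_abs_step_eq_one {m : ℕ} (hstep : ∀ i < m, |w (i + 1) - w i| = 1)
    (hs : s ≤ m) (ht : t ≤ m) (hws : w s = c - 1) (hwt : w t = c + 1) :
    ∃ i, i + 2 ≤ m ∧ w (i + 1) = c ∧
      (w i = c - 1 ∧ w (i + 2) = c + 1 ∨ w i = c + 1 ∧ w (i + 2) = c - 1) := by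
  rcases le_total s t with hst | hts
  · obtain ⟨i, hi, h₀, h₁, h₂⟩ := exists_upcrossing_of_abs_step_eq_one (c := c)
      (fun i hi => hstep i (by omega)) hst (by omega) (by omega)
    exact ⟨i, by omega, h₁, Or.inl ⟨h₀, h₂⟩⟩
  · obtain ⟨i, hi, h₀, h₁, h₂⟩ := exists_upcrossing_of_abs_step_eq_one (w := fun j => -w j)
      (c := -c) (fun i hi => by rw [neg_sub_neg, abs_sub_comm]; exact hstep i (by omega)) hts
      (by omega) (by omega)
    exact ⟨i, by omega, by omega, Or.inr ⟨by omega, by omega⟩⟩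

end UnitStepWalk

namespace PathCat

variable {m n p : ℕ}

def turnSet (f : Fin (m + 1) → Fin (n + 1)) : Set (Fin (m + 1)) :=
  {b | ∃ a c : Fin (m + 1), (a : ℕ) + 1 = b ∧ (b : ℕ) + 1 = c ∧ f a = f c}

theorem turningNumber_eq_ncard_turnSet (f : Fin (m + 1) → Fin (n + 1)) :
    turningNumber f = (turnSet f).ncard := rfl

theorem turnSet_subset_turnSet_comp (f : Fin (m + 1) → Fin (n + 1))
    (g : Fin (n + 1) → Fin (p + 1)) : turnSet f ⊆ turnSet (g ∘ f) := by
  rintro b ⟨a, c, hab, hbc, hac⟩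
  exact ⟨a, c, hab, hbc, congrArg g hac⟩

variable {f : Fin (m + 1) → Fin (n + 1)}

theorem IsEdgeInjFun.abs_sub_eq_one_of_succ_eq (hf : IsEdgeInjFun f) {a b : Fin (m + 1)}
    (hab : (a : ℕ) + 1 = b) : |((f b : ℕ) : ℤ) - (f a : ℕ)| = 1 := by
  have hadj := hf.2.1 a b ⟨by omega, by omega⟩
  have hne : (f a : ℕ) ≠ f b := Fin.val_ne_of_ne (hf.2.2 a b hab)
  unfold AdjF at hadj
  rw [abs_eq zero_le_one]
  omega

theorem IsEdgeInjFun.exists_straight_through (hf : IsEdgeInjFun f) {x c y : Fin (n + 1)}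
    (hxc : (x : ℕ) + 1 = c) (hcy : (c : ℕ) + 1 = y) :
    ∃ a b d : Fin (m + 1), (a : ℕ) + 1 = b ∧ (b : ℕ) + 1 = d ∧ f b = c ∧
      (f a = x ∧ f d = y ∨ f a = y ∧ f d = x) := by
  obtain ⟨s, rfl⟩ := hf.1 x
  obtain ⟨t, rfl⟩ := hf.1 y
  set w : ℕ → ℤ := fun i => ((f (Fin.clamp i m) : ℕ) : ℤ)
  have hw : ∀ i (hi : i < m + 1), w i = (f ⟨i, hi⟩ : ℕ) := fun i hi => by
    simp only [w, Fin.clamp, Nat.min_eq_left (Nat.le_of_lt_succ hi)]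
  have hstep : ∀ i < m, |w (i + 1) - w i| = 1 := fun i hi => by
    rw [hw i (by omega), hw (i + 1) (by omega)]
    exact hf.abs_sub_eq_one_of_succ_eq rfl
  obtain ⟨i, hi, h₁, h₀₂⟩ := exists_crossing_of_abs_step_eq_one (c := c) hstep s.is_le t.is_le
    (by rw [hw s s.2, Fin.eta]; omega) (by rw [hw t t.2, Fin.eta]; omega)
  rw [hw (i + 1) (by omega)] at h₁
  rw [hw i (by omega), hw (i + 2) (by omega)] at h₀₂
  refine ⟨⟨i, by omega⟩, ⟨i + 1, by omega⟩, ⟨i + 2, by omega⟩, rfl, rfl, Fin.ext (by omega), ?_⟩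
  rcases h₀₂ with h | h
  · exact Or.inl ⟨Fin.ext (by omega), Fin.ext (by omega)⟩
  · exact Or.inr ⟨Fin.ext (by omega), Fin.ext (by omega)⟩

theorem IsEdgeInjFun.turnSet_subset_image_turnSet_comp_sdiff (hf : IsEdgeInjFun f)
    (g : Fin (n + 1) → Fin (p + 1)) :
    turnSet g ⊆ f '' (turnSet (g ∘ f) \ turnSet f) := by
  rintro c ⟨x, y, hxc, hcy, hg⟩
  have hxy : x ≠ y := Fin.ne_of_val_ne (by omega)
  obtain ⟨a, b, d, hab, hbd, hb, had⟩ := hf.exists_straight_through hxc hcy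
  have hturn : g (f a) = g (f d) := by
    rcases had with ⟨ha, hd⟩ | ⟨ha, hd⟩ <;> simp only [ha, hd, hg]
  have hstraight : f a ≠ f d := by
    rcases had with ⟨ha, hd⟩ | ⟨ha, hd⟩ <;> rw [ha, hd]
    exacts [hxy, hxy.symm]
  refine ⟨b, ⟨⟨a, d, hab, hbd, hturn⟩, ?_⟩, hb⟩
  rintro ⟨a', d', ha', hd', hfad'⟩
  obtain rfl : a' = a := Fin.ext (by omega)
  obtain rfl : d' = d := Fin.ext (by omega)
  exact hstraight hfad'

end PathCat

open PathCat in
theorem stmt16_general {m n p : ℕ} (f : Fin (m + 1) → Fin (n + 1)) (g : Fin (n + 1) → Fin (p + 1))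
    (hf : IsEdgeInjFun f) :
    turningNumber g + turningNumber f ≤ turningNumber (g ∘ f) := by
  simp only [turningNumber_eq_ncard_turnSet]
  calc (turnSet g).ncard + (turnSet f).ncard
      ≤ (turnSet (g ∘ f) \ turnSet f).ncard + (turnSet f).ncard := by
        gcongr
        exact (Set.ncard_le_ncard (hf.turnSet_subset_image_turnSet_comp_sdiff g)).trans
          Set.ncard_image_le
    _ = (turnSet (g ∘ f)).ncard :=
        Set.ncard_sdiff_add_ncard_of_subset (turnSet_subset_turnSet_comp f g)

open PathCat in
/-- Turning numbers are superadditive under composition of edge-injective morphisms. -/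
theorem stmt16 {m n p : ℕ} (f : Fin (m + 1) → Fin (n + 1)) (g : Fin (n + 1) → Fin (p + 1))
    (hf : IsEdgeInjFun f) (hg : IsEdgeInjFun g) :
    turningNumber g + turningNumber f ≤ turningNumber (g ∘ f) :=
  stmt16_general f g hf
end
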